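/- arXiv:math/0505440 — 4 statements merged into one kernel-verified Lean document; each statement's English description precedes it below -/
import Mathlib

section
/- Let t ∈ (0,1) and let w = (t, 1, 1, 1, 2, 2, 2, 2) ∈ ℝ⁸. If m : Fin 8 → ℤ satisfies ∑_{i,j} m_i C_{ij} m_j = 2 and |∑_i m_i w_i| ≤ 1, then m = e_i or m = −e_i for some i ∈ {0,1,2,3}, where e_i denotes the i-th standard basis vector of ℤ⁸. -/
set_option maxHeartbeats 1600000

/-- The Cartan matrix of type E8, with the trivalent node of the Dynkin diagram
listed first (index 0), followed by its three neighbours (indices 1,2,3);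
index 4 continues the arm through 2, and indices 5,6,7 the arm through 3. -/
def CartanE8 : Matrix (Fin 8) (Fin 8) ℤ :=
  !![ 2,-1,-1,-1, 0, 0, 0, 0;
     -1, 2, 0, 0, 0, 0, 0, 0;
     -1, 0, 2, 0,-1, 0, 0, 0;
     -1, 0, 0, 2, 0,-1, 0, 0;
      0, 0,-1, 0, 2, 0, 0, 0;
      0, 0, 0,-1, 0, 2,-1, 0;
      0, 0, 0, 0, 0,-1, 2,-1;
      0, 0, 0, 0, 0, 0,-1, 2]

private lemma cv8_5 {α : Type*} (a : α) (s : Fin 7 → α) : Matrix.vecCons a s 5 = s 4 := rfl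
private lemma cv8_6 {α : Type*} (a : α) (s : Fin 7 → α) : Matrix.vecCons a s 6 = s 5 := rfl
private lemma cv8_7 {α : Type*} (a : α) (s : Fin 7 → α) : Matrix.vecCons a s 7 = s 6 := rfl
private lemma cv7_5 {α : Type*} (a : α) (s : Fin 6 → α) : Matrix.vecCons a s 5 = s 4 := rfl
private lemma cv7_6 {α : Type*} (a : α) (s : Fin 6 → α) : Matrix.vecCons a s 6 = s 5 := rfl
private lemma cv6_5 {α : Type*} (a : α) (s : Fin 5 → α) : Matrix.vecCons a s 5 = s 4 := rfl
private lemma vecHead_const {α : Type*} {n : ℕ} (c : α) :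
    Matrix.vecHead (fun _ : Fin (n+1) => c) = c := rfl

private lemma int_le_mul_self (x : ℤ) : x ≤ x * x := by
  rcases le_or_gt x 0 with h | h
  · nlinarith [mul_self_nonneg x]
  · nlinarith [mul_le_mul_of_nonneg_left (by linarith : (1:ℤ) ≤ x) (le_of_lt h)]

private lemma zo (x : ℤ) (h : x * x = x) : x = 0 ∨ x = 1 := by
  have h' : x * (x - 1) = 0 := by linear_combination h
  rcases mul_eq_zero.mp h' with h'' | h'' <;> omega

private lemma sqle3 (x : ℤ) (h : x * x ≤ 3) : -1 ≤ x ∧ x ≤ 1 := by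
  constructor <;> nlinarith [sq_nonneg (x + 2), sq_nonneg (x - 2)]

private lemma sqle8 (x : ℤ) (h : x * x ≤ 8) : -2 ≤ x ∧ x ≤ 2 := by
  constructor <;> nlinarith [sq_nonneg (x + 3), sq_nonneg (x - 3)]

private lemma sqle12 (x : ℤ) (h : x * x ≤ 12) : -3 ≤ x ∧ x ≤ 3 := by
  constructor <;> nlinarith [sq_nonneg (x + 4), sq_nonneg (x - 4)]

private lemma sqle24 (x : ℤ) (h : x * x ≤ 24) : -4 ≤ x ∧ x ≤ 4 := by
  constructor <;> nlinarith [sq_nonneg (x + 5), sq_nonneg (x - 5)]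

/-- Cauchy–Schwarz type certificate: a root with nonpositive pairing against
`(0,1,1,1,2,2,2,2)` and positive first coordinate has first coordinate `1`. -/
private lemma bnd (a b c d e f g h : ℤ)
    (hQ : a*a + b*b + c*c + d*d + e*e + f*f + g*g + h*h
        - a*b - a*c - a*d - c*e - d*f - f*g - g*h = 1)
    (hA : b + c + d + 2*(e + f + g + h) ≤ 0) (h1 : 1 ≤ a) : a = 1 := by
  set X := 5*a - (b + c + d + 2*(e + f + g + h)) with hX
  have key : 7854*(X*X) + 154*((51*a - 33*b - 33*c - 33*d + 10*e + 10*f + 10*g + 10*h) *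
        (51*a - 33*b - 33*c - 33*d + 10*e + 10*f + 10*g + 10*h))
      + 2926*((12*b - 5*c - 5*d + e + f + g + h) * (12*b - 5*c - 5*d + e + f + g + h))
      + 7106*((7*c - 5*d - 5*e + f + g + h) * (7*c - 5*d - 5*e + f + g + h))
      + 10659*((4*d - 3*e - 5*f + 2*g + 2*h) * (4*d - 3*e - 5*f + 2*g + 2*h))
      + 2261*((11*e - 7*f + 2*g + 2*h) * (11*e - 7*f + 2*g + 2*h))
      + 4522*((6*f - 8*g + 3*h) * (6*f - 8*g + 3*h))
      + 49742*((2*g - 3*h) * (2*g - 3*h)) = 596904 := by linear_combination 596904 * hQ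
  have hX2 : X*X ≤ 76 := by
    linarith [mul_self_nonneg (51*a - 33*b - 33*c - 33*d + 10*e + 10*f + 10*g + 10*h),
      mul_self_nonneg (12*b - 5*c - 5*d + e + f + g + h),
      mul_self_nonneg (7*c - 5*d - 5*e + f + g + h),
      mul_self_nonneg (4*d - 3*e - 5*f + 2*g + 2*h),
      mul_self_nonneg (11*e - 7*f + 2*g + 2*h),
      mul_self_nonneg (6*f - 8*g + 3*h),
      mul_self_nonneg (2*g - 3*h)]
  have hXa : 5*a ≤ X := by omega
  have : a ≤ 1 := by nlinarith [mul_self_nonneg (X - 10)]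
  omega

/-- Case `a = 1`: the root is the simple root at the trivalent node. -/
private lemma corePos (b c d e f g h : ℤ)
    (hQ : 1 + b*b + c*c + d*d + e*e + f*f + g*g + h*h
        - b - c - d - c*e - d*f - f*g - g*h = 1)
    (hA : b + c + d + 2*(e + f + g + h) ≤ 0) :
    b = 0 ∧ c = 0 ∧ d = 0 ∧ e = 0 ∧ f = 0 ∧ g = 0 ∧ h = 0 := by
  have key : (1-b)*(1-b) + b*b + (1-c)*(1-c) + (c-e)*(c-e) + e*e
      + (1-d)*(1-d) + (d-f)*(d-f) + (f-g)*(f-g) + (g-h)*(g-h) + h*h = 3 := by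
    linear_combination 2 * hQ
  have l1 := int_le_mul_self (1-b); have l2 := int_le_mul_self b
  have l3 := int_le_mul_self (1-c); have l4 := int_le_mul_self (c-e)
  have l5 := int_le_mul_self e; have l6 := int_le_mul_self (1-d)
  have l7 := int_le_mul_self (d-f); have l8 := int_le_mul_self (f-g)
  have l9 := int_le_mul_self (g-h); have l10 := int_le_mul_self h
  have z1 := zo (1-b) (by linarith); have z2 := zo b (by linarith)
  have z3 := zo (1-c) (by linarith); have z4 := zo (c-e) (by linarith)
  have z5 := zo e (by linarith); have z6 := zo (1-d) (by linarith)
  have z7 := zo (d-f) (by linarith); have z8 := zo (f-g) (by linarith)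
  have z9 := zo (g-h) (by linarith); have z10 := zo h (by linarith)
  omega

private lemma arm2zero (c e : ℤ) (h : c*c - c*e + e*e = 0) : c = 0 ∧ e = 0 := by
  constructor
  · exact mul_self_eq_zero.mp (le_antisymm (by nlinarith [mul_self_nonneg (c - e), mul_self_nonneg e]) (mul_self_nonneg c))
  · exact mul_self_eq_zero.mp (le_antisymm (by nlinarith [mul_self_nonneg (c - e), mul_self_nonneg c]) (mul_self_nonneg e))

private lemma arm3zero (d f g h : ℤ) (hp : d*d + f*f + g*g + h*h - d*f - f*g - g*h = 0) :
    d = 0 ∧ f = 0 ∧ g = 0 ∧ h = 0 := by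
  have key : 6*((2*d - f)*(2*d - f)) + 2*((3*f - 2*g)*(3*f - 2*g))
      + (4*g - 3*h)*(4*g - 3*h) + 15*(h*h) = 0 := by linear_combination 24 * hp
  have n1 := mul_self_nonneg (2*d - f)
  have n2 := mul_self_nonneg (3*f - 2*g)
  have n3 := mul_self_nonneg (4*g - 3*h)
  have n4 := mul_self_nonneg h
  have hh : h = 0 := mul_self_eq_zero.mp (le_antisymm (by linarith) n4)
  have hg : g = 0 := by
    have : (4*g - 3*h) = 0 := mul_self_eq_zero.mp (le_antisymm (by linarith) n3)
    omega
  have hf : f = 0 := by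
    have : (3*f - 2*g) = 0 := mul_self_eq_zero.mp (le_antisymm (by linarith) n2)
    omega
  have hd : d = 0 := by
    have : (2*d - f) = 0 := mul_self_eq_zero.mp (le_antisymm (by linarith) n1)
    omega
  exact ⟨hd, hf, hg, hh⟩

/-- Case `a = 0`: the root is plus or minus one of the simple roots 1,2,3. -/
private lemma coreZero (b c d e f g h : ℤ)
    (hQ : b*b + c*c + d*d + e*e + f*f + g*g + h*h - c*e - d*f - f*g - g*h = 1)
    (hs1 : -1 ≤ b + c + d + 2*(e + f + g + h)) (hs2 : b + c + d + 2*(e + f + g + h) ≤ 1) :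
    ((b = 1 ∨ b = -1) ∧ c = 0 ∧ d = 0 ∧ e = 0 ∧ f = 0 ∧ g = 0 ∧ h = 0) ∨
    ((c = 1 ∨ c = -1) ∧ b = 0 ∧ d = 0 ∧ e = 0 ∧ f = 0 ∧ g = 0 ∧ h = 0) ∨
    ((d = 1 ∨ d = -1) ∧ b = 0 ∧ c = 0 ∧ e = 0 ∧ f = 0 ∧ g = 0 ∧ h = 0) := by
  have hp1 : 0 ≤ b*b := mul_self_nonneg b
  have hp2 : 0 ≤ c*c - c*e + e*e := by
    nlinarith [mul_self_nonneg (c - e), mul_self_nonneg c, mul_self_nonneg e]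
  have hp3 : 0 ≤ d*d + f*f + g*g + h*h - d*f - f*g - g*h := by
    nlinarith [mul_self_nonneg (2*d - f), mul_self_nonneg (3*f - 2*g),
      mul_self_nonneg (4*g - 3*h), mul_self_nonneg h]
  have hsplit : (b*b = 1 ∧ c*c - c*e + e*e = 0 ∧ d*d + f*f + g*g + h*h - d*f - f*g - g*h = 0) ∨
      (c*c - c*e + e*e = 1 ∧ b*b = 0 ∧ d*d + f*f + g*g + h*h - d*f - f*g - g*h = 0) ∨
      (d*d + f*f + g*g + h*h - d*f - f*g - g*h = 1 ∧ b*b = 0 ∧ c*c - c*e + e*e = 0) := by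
    generalize hb' : b*b = p1 at *
    generalize hc' : c*c - c*e + e*e = p2 at *
    generalize hd' : d*d + f*f + g*g + h*h - d*f - f*g - g*h = p3 at *
    omega
  rcases hsplit with ⟨h1, h2, h3⟩ | ⟨h1, h2, h3⟩ | ⟨h1, h2, h3⟩
  · obtain ⟨hc, he⟩ := arm2zero c e h2
    obtain ⟨hd, hf, hg, hh⟩ := arm3zero d f g h h3
    exact Or.inl ⟨mul_self_eq_one_iff.mp h1, hc, hd, he, hf, hg, hh⟩
  · have hb : b = 0 := mul_self_eq_zero.mp h2
    obtain ⟨hd, hf, hg, hh⟩ := arm3zero d f g h h3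
    subst hb hd hf hg hh
    have key : (2*c - e)*(2*c - e) + 3*(e*e) = 4 := by linear_combination 4 * h1
    have he' := sqle3 e (by nlinarith [mul_self_nonneg (2*c - e)])
    have hce := sqle8 (2*c - e) (by nlinarith [mul_self_nonneg e])
    have hc' : -1 ≤ c ∧ c ≤ 1 := by omega
    refine Or.inr (Or.inl ?_)
    obtain ⟨hc1, hc2⟩ := hc'; obtain ⟨he1, he2⟩ := he'
    interval_cases c <;> interval_cases e <;> omega
  · have hb : b = 0 := mul_self_eq_zero.mp h2
    obtain ⟨hc, he⟩ := arm2zero c e h3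
    subst hb hc he
    have key : 6*((2*d - f)*(2*d - f)) + 2*((3*f - 2*g)*(3*f - 2*g))
        + (4*g - 3*h)*(4*g - 3*h) + 15*(h*h) = 24 := by linear_combination 24 * h1
    have n1 := mul_self_nonneg (2*d - f)
    have n2 := mul_self_nonneg (3*f - 2*g)
    have n3 := mul_self_nonneg (4*g - 3*h)
    have n4 := mul_self_nonneg h
    have hh' := sqle3 h (by linarith)
    have hgh := sqle24 (4*g - 3*h) (by linarith)
    have hfg := sqle12 (3*f - 2*g) (by linarith)
    have hdf := sqle8 (2*d - f) (by linarith)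
    have hg' : -1 ≤ g ∧ g ≤ 1 := by omega
    have hf' : -1 ≤ f ∧ f ≤ 1 := by omega
    have hd' : -1 ≤ d ∧ d ≤ 1 := by omega
    refine Or.inr (Or.inr ?_)
    obtain ⟨hd1, hd2⟩ := hd'; obtain ⟨hf1, hf2⟩ := hf'
    obtain ⟨hg1, hg2⟩ := hg'; obtain ⟨hh1, hh2⟩ := hh'
    interval_cases d <;> interval_cases f <;> interval_cases g <;> interval_cases h <;> omega

/-- If a root `m` of E8 pairs with the weight vector `(t,1,1,1,2,2,2,2)`,
`0 < t < 1`, to a number of absolute value at most 1, then `m` is `±eᵢ` for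
some `i ∈ {0,1,2,3}`. -/
theorem e8_root_small_weight (t : ℝ) (ht : t ∈ Set.Ioo (0 : ℝ) 1) (m : Fin 8 → ℤ)
    (hm : ∑ i, ∑ j, m i * CartanE8 i j * m j = 2)
    (hw : |∑ i, (m i : ℝ) * ![t, 1, 1, 1, 2, 2, 2, 2] i| ≤ 1) :
    ∃ i : Fin 8, i.val ≤ 3 ∧ (m = Pi.single i 1 ∨ m = -Pi.single i 1) := by
  obtain ⟨ht0, ht1⟩ := ht
  simp only [CartanE8, Fin.sum_univ_eight, Matrix.cons_val_zero, Matrix.cons_val_one,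
    Matrix.head_cons, Matrix.cons_val_two, Matrix.tail_cons, Matrix.cons_val_three,
    Matrix.cons_val_four, cv8_5, cv8_6, cv8_7, cv7_5, cv7_6, cv6_5, vecHead_const,
    Matrix.cons_val', Matrix.cons_val_fin_one, Matrix.empty_val', Matrix.of_apply] at hm hw
  rw [abs_le] at hw
  obtain ⟨hw1, hw2⟩ := hw
  have hQ : m 0 * m 0 + m 1 * m 1 + m 2 * m 2 + m 3 * m 3 + m 4 * m 4 + m 5 * m 5
      + m 6 * m 6 + m 7 * m 7 - m 0 * m 1 - m 0 * m 2 - m 0 * m 3 - m 2 * m 4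
      - m 3 * m 5 - m 5 * m 6 - m 6 * m 7 = 1 := by
    refine mul_left_cancel₀ (two_ne_zero) ?_
    linear_combination hm
  set s : ℤ := m 1 + m 2 + m 3 + 2*(m 4 + m 5 + m 6 + m 7) with hs
  have hsR : ((s : ℤ) : ℝ) = (m 1 : ℝ) + (m 2 : ℝ) + (m 3 : ℝ) + (m 4 : ℝ)*2
      + (m 5 : ℝ)*2 + (m 6 : ℝ)*2 + (m 7 : ℝ)*2 := by
    rw [hs]; push_cast; ring
  rcases lt_trichotomy (m 0) 0 with hneg | hzero | hpos
  · -- m 0 < 0 : apply the positive case to -m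
    have hm0R : ((m 0 : ℤ) : ℝ) < 0 := by exact_mod_cast hneg
    have h1 : (m 0 : ℝ) * t < 0 := mul_neg_of_neg_of_pos hm0R ht0
    have h2' : (m 0 : ℝ) * 1 < (m 0 : ℝ) * t := mul_lt_mul_of_neg_left ht1 hm0R
    rw [mul_one] at h2'
    have hsge : 0 ≤ s := by
      have hlt : (-1 : ℝ) < ((s : ℤ) : ℝ) := by rw [hsR]; linarith
      have : (-1 : ℤ) < s := by exact_mod_cast hlt
      omega
    have hsle : m 0 + s ≤ 0 := by
      have hlt : ((m 0 : ℤ) : ℝ) + ((s : ℤ) : ℝ) < 1 := by rw [hsR]; linarith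
      have : ((m 0 + s : ℤ) : ℝ) < 1 := by push_cast; push_cast at hlt; linarith
      have : m 0 + s < 1 := by exact_mod_cast this
      omega
    have hQn : (-m 0) * (-m 0) + (-m 1) * (-m 1) + (-m 2) * (-m 2) + (-m 3) * (-m 3)
        + (-m 4) * (-m 4) + (-m 5) * (-m 5) + (-m 6) * (-m 6) + (-m 7) * (-m 7)
        - (-m 0) * (-m 1) - (-m 0) * (-m 2) - (-m 0) * (-m 3) - (-m 2) * (-m 4)
        - (-m 3) * (-m 5) - (-m 5) * (-m 6) - (-m 6) * (-m 7) = 1 := by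
      linear_combination hQ
    have ha : -m 0 = 1 :=
      bnd (-m 0) (-m 1) (-m 2) (-m 3) (-m 4) (-m 5) (-m 6) (-m 7) hQn (by omega) (by omega)
    have ha' : m 0 = -1 := by omega
    have hz := corePos (-m 1) (-m 2) (-m 3) (-m 4) (-m 5) (-m 6) (-m 7)
      (by rw [ha'] at hQ; linear_combination hQ) (by omega)
    obtain ⟨hb, hc, hd, he, hf, hg, hh⟩ := hz
    refine ⟨0, by decide, Or.inr ?_⟩
    funext j
    fin_cases j <;> simp [Pi.single_apply] <;> omega
  · -- m 0 = 0
    have hz0 : ((m 0 : ℤ) : ℝ) = 0 := by rw [hzero]; norm_num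
    have hs1 : -1 ≤ s := by
      have : (-1 : ℝ) ≤ ((s : ℤ) : ℝ) := by rw [hsR]; nlinarith
      exact_mod_cast this
    have hs2 : s ≤ 1 := by
      have : ((s : ℤ) : ℝ) ≤ 1 := by rw [hsR]; nlinarith
      exact_mod_cast this
    have hz := coreZero (m 1) (m 2) (m 3) (m 4) (m 5) (m 6) (m 7)
      (by rw [hzero] at hQ; linear_combination hQ) (by omega) (by omega)
    rcases hz with ⟨hb, hc, hd, he, hf, hg, hh⟩ | ⟨hc, hb, hd, he, hf, hg, hh⟩ |
      ⟨hd, hb, hc, he, hf, hg, hh⟩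
    · rcases hb with hb | hb
      · exact ⟨1, by decide, Or.inl (by funext j; fin_cases j <;> simp [Pi.single_apply] <;> omega)⟩
      · exact ⟨1, by decide, Or.inr (by funext j; fin_cases j <;> simp [Pi.single_apply] <;> omega)⟩
    · rcases hc with hc | hc
      · exact ⟨2, by decide, Or.inl (by funext j; fin_cases j <;> simp [Pi.single_apply] <;> omega)⟩
      · exact ⟨2, by decide, Or.inr (by funext j; fin_cases j <;> simp [Pi.single_apply] <;> omega)⟩
    · rcases hd with hd | hd
      · exact ⟨3, by decide, Or.inl (by funext j; fin_cases j <;> simp [Pi.single_apply] <;> omega)⟩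
      · exact ⟨3, by decide, Or.inr (by funext j; fin_cases j <;> simp [Pi.single_apply] <;> omega)⟩
  · -- m 0 > 0
    have hm0R : (0 : ℝ) < ((m 0 : ℤ) : ℝ) := by exact_mod_cast hpos
    have h1 : (0 : ℝ) < (m 0 : ℝ) * t := mul_pos hm0R ht0
    have h2' : (m 0 : ℝ) * t < (m 0 : ℝ) * 1 := mul_lt_mul_of_pos_left ht1 hm0R
    rw [mul_one] at h2'
    have hsle : s ≤ 0 := by
      have hlt : ((s : ℤ) : ℝ) < 1 := by rw [hsR]; linarith
      have : s < 1 := by exact_mod_cast hlt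
      omega
    have hsge : 0 ≤ m 0 + s := by
      have hlt : (-1 : ℝ) < ((m 0 : ℤ) : ℝ) + ((s : ℤ) : ℝ) := by rw [hsR]; linarith
      have : ((m 0 + s : ℤ) : ℝ) > -1 := by push_cast; push_cast at hlt; linarith
      have : -1 < m 0 + s := by exact_mod_cast this
      omega
    have ha : m 0 = 1 :=
      bnd (m 0) (m 1) (m 2) (m 3) (m 4) (m 5) (m 6) (m 7) hQ (by omega) (by omega)
    have hz := corePos (m 1) (m 2) (m 3) (m 4) (m 5) (m 6) (m 7)
      (by rw [ha] at hQ; linear_combination hQ) (by omega)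
    obtain ⟨hb, hc, hd, he, hf, hg, hh⟩ := hz
    refine ⟨0, by decide, Or.inl ?_⟩
    funext j
    fin_cases j <;> simp [Pi.single_apply] <;> omega
end

section
/- For every purely imaginary unit quaternion e (in particular for e ∈ {i, j, k}), the ℂ-linear extension of left multiplication L_e to ℍ⊗ℂ maps η into η. -/
/-!
Write `e = r + α u + f` with `r, α` real and `f` orthogonal to `1` and `u`. Real scalars and
`L_u` (which acts by `±i`) preserve `ν⁺` and `ξ⁻`. The imaginary `f ⊥ u` anticommutes with `u`,
and `L_f` swaps `ξ` and `ν`: for `0 ≠ x ∈ ξ` the invariant plane `ξ` is spanned by `x, u x`, and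
`⟪f x, x⟫ = ‖x‖² ⟪f, 1⟫ = 0`, `⟪f x, u x⟫ = ‖x‖² ⟪f, u⟫ = 0`, so `f x ∈ ξᗮ = ν`. Hence `L_f`
exchanges `ν⁺` and `ξ⁻`, and `L_e` preserves `η = ν⁺ ⊕ ξ⁻`.
-/

open scoped Quaternion RealInnerProductSpace

open Module Submodule

theorem Submodule.orthogonal_eq_of_isCompl {𝕜 E : Type*} [RCLike 𝕜] [NormedAddCommGroup E]
    [InnerProductSpace 𝕜 E] {U V : Submodule 𝕜 E} [U.HasOrthogonalProjection] (hUV : U ⟂ V)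
    (h : IsCompl U V) : Uᗮ = V := by
  refine (eq_of_le_of_inf_le_of_sup_le hUV.ge (z := U) ?_ ?_).symm
  · exact (orthogonal_disjoint U).symm.le_bot.trans bot_le
  · exact h.symm.sup_eq_top ▸ le_top

namespace Quaternion

theorem inner_one_left (u : ℍ[ℝ]) : ⟪1, u⟫ = u.re := by
  simp [inner_def]

theorem inner_mul_right_mul_right (g h z : ℍ[ℝ]) : ⟪g * z, h * z⟫ = ‖z‖ ^ 2 * ⟪g, h⟫ := by
  rw [inner_def, inner_def, star_mul, mul_assoc, ← mul_assoc z, self_mul_star,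
    normSq_eq_norm_mul_self, ← sq, coe_mul_eq_smul, mul_smul_comm, re_smul, smul_eq_mul]

theorem mul_eq_neg_mul_of_inner_eq_zero {u f : ℍ[ℝ]} (hu : u.re = 0) (hf : f.re = 0)
    (huf : ⟪u, f⟫ = 0) : u * f = -(f * u) := by
  simp only [inner_def, re_mul, re_star, imI_star, imJ_star, imK_star, hu, hf] at huf
  ext <;>
    simp only [re_mul, imI_mul, imJ_mul, imK_mul, re_neg, imI_neg, imJ_neg, imK_neg, hu, hf]
  · linear_combination -2 * huf
  all_goals ring

variable {u : ℍ[ℝ]} {V : Submodule ℝ ℍ[ℝ]}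

theorem span_pair_mul_eq (hu : u.re = 0) (hu0 : u ≠ 0) (hV : finrank ℝ V = 2)
    (huV : ∀ x ∈ V, u * x ∈ V) {x : ℍ[ℝ]} (hx : x ∈ V) (hx0 : x ≠ 0) :
    span ℝ {x, u * x} = V := by
  have hind : LinearIndependent ℝ ![x, u * x] := by
    refine linearIndependent_of_ne_zero_of_inner_eq_zero
      (Fin.forall_fin_two.2 ⟨hx0, mul_ne_zero hu0 hx0⟩) ?_
    have h : ⟪x, u * x⟫ = 0 := by
      simpa [inner_one_left, hu] using inner_mul_right_mul_right 1 u x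
    intro i j hij
    fin_cases i <;> fin_cases j <;> simp_all [real_inner_comm]
  have hle : span ℝ {x, u * x} ≤ V :=
    span_le.2 (Set.insert_subset hx (Set.singleton_subset_iff.2 (huV x hx)))
  refine eq_of_le_of_finrank_eq hle ?_
  rw [hV, ← Matrix.range_cons_cons_empty, finrank_span_eq_card hind, Fintype.card_fin]

theorem mul_mem_orthogonal (hu : u.re = 0) (hu0 : u ≠ 0) (hV : finrank ℝ V = 2)
    (huV : ∀ x ∈ V, u * x ∈ V) {f : ℍ[ℝ]} (hf : f.re = 0) (hfu : ⟪f, u⟫ = 0) {x : ℍ[ℝ]}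
    (hx : x ∈ V) : f * x ∈ Vᗮ := by
  rcases eq_or_ne x 0 with rfl | hx0
  · simp
  rw [mem_orthogonal, ← span_pair_mul_eq hu hu0 hV huV hx hx0]
  intro y hy
  obtain ⟨a, b, rfl⟩ := mem_span_pair.1 hy
  have h1 : ⟪x, f * x⟫ = 0 := by
    simpa [inner_one_left, hf] using inner_mul_right_mul_right 1 f x
  have h2 : ⟪u * x, f * x⟫ = 0 := by
    rw [inner_mul_right_mul_right, real_inner_comm, hfu, mul_zero]
  simp [inner_add_left, inner_smul_left, h1, h2]

/-- `(a, b)` stands for `a + i b ∈ ℍ ⊗ ℂ`, and `L_u (a + i b) = i (a + i b)` reads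
`u a = -b`, `u b = a`. The `(-i)`-eigenspace of `L_u` on `V ⊗ ℂ` is `iEigenspace (-u) V`. -/
def iEigenspace (u : ℍ[ℝ]) (V : Submodule ℝ ℍ[ℝ]) : Submodule ℝ (ℍ[ℝ] × ℍ[ℝ]) where
  carrier := {p | p.1 ∈ V ∧ p.2 ∈ V ∧ u * p.1 = -p.2 ∧ u * p.2 = p.1}
  add_mem' := by
    rintro p q ⟨hp₁, hp₂, hup₁, hup₂⟩ ⟨hq₁, hq₂, huq₁, huq₂⟩
    refine ⟨V.add_mem hp₁ hq₁, V.add_mem hp₂ hq₂, ?_, ?_⟩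
    · rw [Prod.fst_add, Prod.snd_add, mul_add, hup₁, huq₁, neg_add]
    · rw [Prod.fst_add, Prod.snd_add, mul_add, hup₂, huq₂]
  zero_mem' := by simp
  smul_mem' := by
    rintro r p ⟨hp₁, hp₂, hup₁, hup₂⟩
    refine ⟨V.smul_mem r hp₁, V.smul_mem r hp₂, ?_, ?_⟩
    · rw [Prod.smul_fst, Prod.smul_snd, mul_smul_comm, hup₁, smul_neg]
    · rw [Prod.smul_fst, Prod.smul_snd, mul_smul_comm, hup₂]

variable {W : Submodule ℝ ℍ[ℝ]} {p : ℍ[ℝ] × ℍ[ℝ]}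

theorem mem_iEigenspace_neg :
    p ∈ iEigenspace (-u) V ↔ p.1 ∈ V ∧ p.2 ∈ V ∧ u * p.1 = p.2 ∧ u * p.2 = -p.1 := by
  change _ ∧ _ ∧ -u * p.1 = -p.2 ∧ -u * p.2 = p.1 ↔ _
  rw [neg_mul, neg_mul, neg_inj, neg_eq_iff_eq_neg]

theorem smul_mem_iEigenspace {c q : ℍ[ℝ]} (hVW : ∀ x ∈ V, q * x ∈ W) (hq : c * q = q * u)
    (hp : p ∈ iEigenspace u V) : q • p ∈ iEigenspace c W := by
  obtain ⟨hp₁, hp₂, hup₁, hup₂⟩ := hp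
  refine ⟨hVW _ hp₁, hVW _ hp₂, ?_, ?_⟩
  · change c * (q * p.1) = -(q * p.2)
    rw [← mul_assoc, hq, mul_assoc, hup₁, mul_neg]
  · change c * (q * p.2) = q * p.1
    rw [← mul_assoc, hq, mul_assoc, hup₂]

noncomputable def eta (u : ℍ[ℝ]) (ξ ν : Submodule ℝ ℍ[ℝ]) : Submodule ℝ (ℍ[ℝ] × ℍ[ℝ]) :=
  iEigenspace u ν ⊔ iEigenspace (-u) ξ

variable {ξ ν : Submodule ℝ ℍ[ℝ]} {q : ℍ[ℝ]} {v : ℍ[ℝ] × ℍ[ℝ]}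

theorem smul_mem_eta_of_commute (hξ : ∀ x ∈ ξ, q * x ∈ ξ) (hν : ∀ y ∈ ν, q * y ∈ ν)
    (hq : Commute u q) (hv : v ∈ eta u ξ ν) : q • v ∈ eta u ξ ν := by
  obtain ⟨s, hs, w, hw, rfl⟩ := mem_sup.1 hv
  rw [smul_add]
  exact add_mem (mem_sup_left (smul_mem_iEigenspace hν hq hs))
    (mem_sup_right (smul_mem_iEigenspace hξ hq.neg_left hw))

theorem smul_mem_eta_of_anticommute (hξ : ∀ x ∈ ξ, q * x ∈ ν) (hν : ∀ y ∈ ν, q * y ∈ ξ)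
    (hq : u * q = -(q * u)) (hv : v ∈ eta u ξ ν) : q • v ∈ eta u ξ ν := by
  obtain ⟨s, hs, w, hw, rfl⟩ := mem_sup.1 hv
  rw [smul_add, add_comm]
  exact add_mem (mem_sup_left (smul_mem_iEigenspace hξ (by rw [hq, mul_neg]) hw))
    (mem_sup_right (smul_mem_iEigenspace hν (by rw [neg_mul, hq, neg_neg]) hs))

theorem smul_mem_eta (hu : u.re = 0) (hu1 : ‖u‖ = 1) (hξ : finrank ℝ ξ = 2)
    (hν : finrank ℝ ν = 2) (hξν : ξᗮ = ν) (hνξ : νᗮ = ξ) (huξ : ∀ x ∈ ξ, u * x ∈ ξ)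
    (huν : ∀ y ∈ ν, u * y ∈ ν) (q : ℍ[ℝ]) (hv : v ∈ eta u ξ ν) : q • v ∈ eta u ξ ν := by
  have hu0 : u ≠ 0 := norm_ne_zero_iff.1 (hu1 ▸ one_ne_zero)
  set f := q - q.re • 1 - ⟪q, u⟫ • u with hf
  have hf_re : f.re = 0 := by simp [f, hu]
  have hfu : ⟪f, u⟫ = 0 := by
    simp [f, inner_sub_left, inner_smul_left, inner_one_left, hu, hu1]
  have hq : q = q.re • 1 + ⟪q, u⟫ • u + f := by rw [hf]; abel
  rw [hq, add_smul, add_smul, smul_assoc, smul_assoc, one_smul]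
  refine add_mem (add_mem (smul_mem _ _ hv) (smul_mem _ _ ?_)) ?_
  · exact smul_mem_eta_of_commute huξ huν (Commute.refl u) hv
  · refine smul_mem_eta_of_anticommute (fun x hx ↦ ?_) (fun y hy ↦ ?_)
      (mul_eq_neg_mul_of_inner_eq_zero hu hf_re (real_inner_comm f u ▸ hfu)) hv
    · exact hξν ▸ mul_mem_orthogonal hu hu0 hξ huξ hf_re hfu hx
    · exact hνξ ▸ mul_mem_orthogonal hu hu0 hν huν hf_re hfu hy

end Quaternion

theorem left_mul_preserves_eta_general
    (u : ℍ[ℝ]) (hu_im : u.re = 0) (hu_unit : ‖u‖ = 1)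
    (ξ ν : Submodule ℝ ℍ[ℝ])
    (hξdim : Module.finrank ℝ ξ = 2) (hνdim : Module.finrank ℝ ν = 2)
    (horth : ∀ x ∈ ξ, ∀ y ∈ ν, ⟪x, y⟫ = 0)
    (hcompl : IsCompl ξ ν)
    (hJξ : ∀ x ∈ ξ, u * x ∈ ξ) (hJν : ∀ y ∈ ν, u * y ∈ ν)
    (νp ξm η : Set (ℍ[ℝ] × ℍ[ℝ]))
    -- `(a,b) ∈ ν⁺` iff `a, b ∈ ν` and `J(a + ib) = i(a + ib)`
    (hνp : νp = {p : ℍ[ℝ] × ℍ[ℝ] |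
      p.1 ∈ ν ∧ p.2 ∈ ν ∧ u * p.1 = -p.2 ∧ u * p.2 = p.1})
    -- `(a,b) ∈ ξ⁻` iff `a, b ∈ ξ` and `J(a + ib) = -i(a + ib)`
    (hξm : ξm = {p : ℍ[ℝ] × ℍ[ℝ] |
      p.1 ∈ ξ ∧ p.2 ∈ ξ ∧ u * p.1 = p.2 ∧ u * p.2 = -p.1})
    (hη : η = {v : ℍ[ℝ] × ℍ[ℝ] | ∃ s ∈ νp, ∃ w ∈ ξm, v = s + w})
    (e : ℍ[ℝ]) :
    ∀ v ∈ η, ((e * v.1, e * v.2) : ℍ[ℝ] × ℍ[ℝ]) ∈ η := by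
  subst hνp hξm hη
  have hξν : ξ ⟂ ν := isOrtho_iff_inner_eq.2 horth
  rintro _ ⟨s, hs, w, hw, rfl⟩
  have hsw : s + w ∈ Quaternion.eta u ξ ν :=
    mem_sup.2 ⟨s, hs, w, Quaternion.mem_iEigenspace_neg.2 hw, rfl⟩
  obtain ⟨s', hs', w', hw', h⟩ := mem_sup.1 <|
    Quaternion.smul_mem_eta hu_im hu_unit hξdim hνdim (orthogonal_eq_of_isCompl hξν hcompl)
      (orthogonal_eq_of_isCompl hξν.symm hcompl.symm) hJξ hJν e hsw
  exact ⟨s', hs', w', Quaternion.mem_iEigenspace_neg.1 hw', h.symm⟩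

/-- Model `ℍ ⊗ ℂ` as pairs `(a, b)` of quaternions representing `a + ib`;
complex scalar `i` acts by `(a,b) ↦ (-b,a)`, the complex-linear extension of a
real-linear map acts componentwise, and `J := L_u` for a unit imaginary
quaternion `u`.  If `ξ, ν` are orthogonal complementary 2-dimensional real
subspaces of `ℍ`, both invariant under `J`, `ν⁺` is the `i`-eigenspace of `J`
in `ν ⊗ ℂ`, `ξ⁻` the `(−i)`-eigenspace of `J` in `ξ ⊗ ℂ` and `η := ν⁺ ⊕ ξ⁻`,
then for every purely imaginary unit quaternion `e`, the complex-linear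
extension of left multiplication `L_e` maps `η` into `η`. -/
theorem left_mul_preserves_eta
    (u : ℍ[ℝ]) (hu_im : u.re = 0) (hu_unit : ‖u‖ = 1)
    (ξ ν : Submodule ℝ ℍ[ℝ])
    (hξdim : Module.finrank ℝ ξ = 2) (hνdim : Module.finrank ℝ ν = 2)
    (horth : ∀ x ∈ ξ, ∀ y ∈ ν, ⟪x, y⟫ = 0)
    (hcompl : IsCompl ξ ν)
    (hJξ : ∀ x ∈ ξ, u * x ∈ ξ) (hJν : ∀ y ∈ ν, u * y ∈ ν)
    (νp ξm η : Set (ℍ[ℝ] × ℍ[ℝ]))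
    -- `(a,b) ∈ ν⁺` iff `a, b ∈ ν` and `J(a + ib) = i(a + ib)`
    (hνp : νp = {p : ℍ[ℝ] × ℍ[ℝ] |
      p.1 ∈ ν ∧ p.2 ∈ ν ∧ u * p.1 = -p.2 ∧ u * p.2 = p.1})
    -- `(a,b) ∈ ξ⁻` iff `a, b ∈ ξ` and `J(a + ib) = -i(a + ib)`
    (hξm : ξm = {p : ℍ[ℝ] × ℍ[ℝ] |
      p.1 ∈ ξ ∧ p.2 ∈ ξ ∧ u * p.1 = p.2 ∧ u * p.2 = -p.1})
    (hη : η = {v : ℍ[ℝ] × ℍ[ℝ] | ∃ s ∈ νp, ∃ w ∈ ξm, v = s + w})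
    (e : ℍ[ℝ]) (he_im : e.re = 0) (he_unit : ‖e‖ = 1) :
    ∀ v ∈ η, ((e * v.1, e * v.2) : ℍ[ℝ] × ℍ[ℝ]) ∈ η :=
  left_mul_preserves_eta_general u hu_im hu_unit ξ ν hξdim hνdim horth hcompl hJξ hJν νp ξm η hνp
    hξm hη e
end

section
/- For t ∈ (0,1) and ρ = (ρ₁,ρ₂,ρ₃) ∈ ℝ³, let ω_{t,ρ} be the unique element of L⊗ℝ satisfying ω·α₀ = t, ω·α_i = 1 for i = 1,2,3, ω·α_j = 2 for j = 4,…,7, ω·β_j = 2 for j = 0,…,7, ω·(ξ_j−η_j) = 2 and ω·(ξ_j+η_j) = ρ_j for j = 1,2,3 (such ω exists and is unique since the form on L⊗ℝ is nondegenerate). Then there is a constant C > 0 such that for all t ∈ (0,1) and all ρ ∈ ℝ³: (1/2)‖ρ‖² ≥ ω_{t,ρ}·ω_{t,ρ} ≥ (1/2)‖ρ‖² − C, where ‖ρ‖ is the Euclidean norm of ρ. -/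
open scoped BigOperators

/-- Index type for the K3 lattice: two copies of `Fin 8` (the two `-E8` blocks,
bases α and β) and two copies of `Fin 3` (the ξ's and η's of the three
hyperbolic blocks). -/
abbrev K3Idx : Type := (Fin 8 ⊕ Fin 8) ⊕ (Fin 3 ⊕ Fin 3)

/-- Gram matrix of the K3 lattice `-E8 ⊕ -E8 ⊕ H ⊕ H ⊕ H`. -/
def K3Gram : K3Idx → K3Idx → ℤ
  | .inl (.inl i), .inl (.inl j) => -CartanE8 i j
  | .inl (.inr i), .inl (.inr j) => -CartanE8 i j
  | .inr (.inl i), .inr (.inr j) => if i = j then 1 else 0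
  | .inr (.inr i), .inr (.inl j) => if i = j then 1 else 0
  | _, _ => 0

/-- The K3 lattice: free ℤ-module of rank 22. -/
abbrev K3L : Type := K3Idx → ℤ

def alp (i : Fin 8) : K3L := Pi.single (.inl (.inl i)) 1
def bet (i : Fin 8) : K3L := Pi.single (.inl (.inr i)) 1
def xiv (j : Fin 3) : K3L := Pi.single (.inr (.inl j)) 1
def etav (j : Fin 3) : K3L := Pi.single (.inr (.inr j)) 1

/-- The intersection form on the K3 lattice. -/
def bI (x y : K3L) : ℤ := ∑ i, ∑ j, x i * K3Gram i j * y j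

/-- The ℝ-bilinear extension of the intersection form to `L ⊗ ℝ`. -/
def bR (x y : K3Idx → ℝ) : ℝ := ∑ i, ∑ j, x i * (K3Gram i j : ℝ) * y j

/-- The ℂ-bilinear extension of the intersection form to `L ⊗ ℂ`. -/
noncomputable def bC (x y : K3Idx → ℂ) : ℂ := ∑ i, ∑ j, x i * (K3Gram i j : ℂ) * y j

/-- Inclusion `L → L ⊗ ℝ`. -/
def toR (x : K3L) : K3Idx → ℝ := fun i => (x i : ℝ)

/-- Inclusion `L → L ⊗ ℂ`. -/
noncomputable def toC (x : K3L) : K3Idx → ℂ := fun i => (x i : ℂ)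

/-- Complex conjugation on `L ⊗ ℂ`. -/
noncomputable def conjC (x : K3Idx → ℂ) : K3Idx → ℂ := fun i => starRingEnd ℂ (x i)

open Matrix in
lemma k3_cons_val_five {α : Type*} {m : ℕ} (x : α) (u : Fin (m+5) → α) :
    vecCons x u 5 = vecHead (vecTail (vecTail (vecTail (vecTail u)))) := rfl

open Matrix in
lemma k3_cons_val_six {α : Type*} {m : ℕ} (x : α) (u : Fin (m+6) → α) :
    vecCons x u 6 = vecHead (vecTail (vecTail (vecTail (vecTail (vecTail u))))) := rfl

open Matrix in
lemma k3_cons_val_seven {α : Type*} {m : ℕ} (x : α) (u : Fin (m+7) → α) :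
    vecCons x u 7 = vecHead (vecTail (vecTail (vecTail (vecTail (vecTail (vecTail u)))))) := rfl

set_option maxHeartbeats 4000000 in
set_option maxRecDepth 8000 in
/-- For `t ∈ (0,1)` and `ρ ∈ ℝ³`, let `ω` be the (unique) element of `L ⊗ ℝ`
with `ω·α₀ = t`, `ω·αᵢ = 1` for `i = 1,2,3`, `ω·αⱼ = 2` for `j = 4,…,7`,
`ω·βⱼ = 2` for all `j`, `ω·(ξⱼ−ηⱼ) = 2` and `ω·(ξⱼ+ηⱼ) = ρⱼ`.  Then there is
`C > 0`, independent of `t` and `ρ`, with `½‖ρ‖² ≥ ω·ω ≥ ½‖ρ‖² − C`. -/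
theorem omega_self_intersection_bounds :
    ∃ C : ℝ, 0 < C ∧
      ∀ t : ℝ, t ∈ Set.Ioo (0 : ℝ) 1 → ∀ ρ : Fin 3 → ℝ, ∀ ω : K3Idx → ℝ,
        bR ω (toR (alp 0)) = t →
        (∀ i : Fin 8, (i = 1 ∨ i = 2 ∨ i = 3) → bR ω (toR (alp i)) = 1) →
        (∀ i : Fin 8, 4 ≤ i.val → bR ω (toR (alp i)) = 2) →
        (∀ i : Fin 8, bR ω (toR (bet i)) = 2) →
        (∀ j : Fin 3, bR ω (toR (xiv j - etav j)) = 2) →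
        (∀ j : Fin 3, bR ω (toR (xiv j + etav j)) = ρ j) →
        bR ω ω ≤ (1 / 2) * ∑ j, (ρ j) ^ 2 ∧
          (1 / 2) * ∑ j, (ρ j) ^ 2 - C ≤ bR ω ω := by

  refine ⟨4000, by norm_num, ?_⟩
  intro t ht ρ ω hA0 hA hA4 hB hM hP
  have e1 := hA 1 (Or.inl rfl)
  have e2 := hA 2 (Or.inr (Or.inl rfl))
  have e3 := hA 3 (Or.inr (Or.inr rfl))
  have e4 := hA4 4 (by decide)
  have e5 := hA4 5 (by decide)
  have e6 := hA4 6 (by decide)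
  have e7 := hA4 7 (by decide)
  have f0 := hB 0
  have f1 := hB 1
  have f2 := hB 2
  have f3 := hB 3
  have f4 := hB 4
  have f5 := hB 5
  have f6 := hB 6
  have f7 := hB 7
  have m0 := hM 0
  have m1 := hM 1
  have m2 := hM 2
  have p0 := hP 0
  have p1 := hP 1
  have p2 := hP 2
  simp only [bR, toR, alp, bet, xiv, etav, Pi.single_apply, Pi.sub_apply, Pi.add_apply,
    Int.cast_sub, Int.cast_add, Fintype.sum_sum_type, Fin.sum_univ_eight,
    Fin.sum_univ_three, K3Gram, CartanE8, Matrix.cons_val', Matrix.cons_val_zero,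
    Matrix.cons_val_one, Matrix.head_cons, Matrix.empty_val', Matrix.cons_val_fin_one,
    Matrix.of_apply, Matrix.cons_val_two, Matrix.cons_val_three, Matrix.cons_val_four,
    k3_cons_val_five, k3_cons_val_six, k3_cons_val_seven, Matrix.tail_cons]
    at hA0 e1 e2 e3 e4 e5 e6 e7 f0 f1 f2 f3 f4 f5 f6 f7 m0 m1 m2 p0 p1 p2 ⊢
  simp (config := { decide := true }) only [if_true, if_false, reduceCtorEq, Int.cast_neg,
    Int.cast_ofNat, Int.cast_one, Int.cast_zero, Int.cast_two, Int.reduceNeg, Int.cast_sub,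
    Int.cast_add, mul_zero, zero_mul, mul_one, one_mul, add_zero, zero_add, neg_zero,
    sub_zero, zero_sub, mul_neg, neg_mul, neg_neg, Matrix.vecHead, Matrix.vecTail,
    Function.comp_apply]
    at hA0 e1 e2 e3 e4 e5 e6 e7 f0 f1 f2 f3 f4 f5 f6 f7 m0 m1 m2 p0 p1 p2 ⊢
  have ha0 : ω (Sum.inl (Sum.inl 0)) = -30*t - 151 := by linarith
  have ha1 : ω (Sum.inl (Sum.inl 1)) = -15*t - 76 := by linarith
  have ha2 : ω (Sum.inl (Sum.inl 2)) = -20*t - 102 := by linarith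
  have ha3 : ω (Sum.inl (Sum.inl 3)) = -24*t - 124 := by linarith
  have ha4 : ω (Sum.inl (Sum.inl 4)) = -10*t - 52 := by linarith
  have ha5 : ω (Sum.inl (Sum.inl 5)) = -18*t - 96 := by linarith
  have ha6 : ω (Sum.inl (Sum.inl 6)) = -12*t - 66 := by linarith
  have ha7 : ω (Sum.inl (Sum.inl 7)) = -6*t - 34 := by linarith
  have hb0 : ω (Sum.inl (Sum.inr 0)) = -270 := by linarith
  have hb1 : ω (Sum.inl (Sum.inr 1)) = -136 := by linarith
  have hb2 : ω (Sum.inl (Sum.inr 2)) = -182 := by linarith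
  have hb3 : ω (Sum.inl (Sum.inr 3)) = -220 := by linarith
  have hb4 : ω (Sum.inl (Sum.inr 4)) = -92 := by linarith
  have hb5 : ω (Sum.inl (Sum.inr 5)) = -168 := by linarith
  have hb6 : ω (Sum.inl (Sum.inr 6)) = -114 := by linarith
  have hb7 : ω (Sum.inl (Sum.inr 7)) = -58 := by linarith
  have hx0 : ω (Sum.inr (Sum.inl 0)) = ρ 0 / 2 - 1 := by linarith
  have hx1 : ω (Sum.inr (Sum.inl 1)) = ρ 1 / 2 - 1 := by linarith
  have hx2 : ω (Sum.inr (Sum.inl 2)) = ρ 2 / 2 - 1 := by linarith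
  have hy0 : ω (Sum.inr (Sum.inr 0)) = ρ 0 / 2 + 1 := by linarith
  have hy1 : ω (Sum.inr (Sum.inr 1)) = ρ 1 / 2 + 1 := by linarith
  have hy2 : ω (Sum.inr (Sum.inr 2)) = ρ 2 / 2 + 1 := by linarith
  rw [ha0, ha1, ha2, ha3, ha4, ha5, ha6, ha7, hb0, hb1, hb2, hb3, hb4, hb5, hb6, hb7,
    hx0, hx1, hx2, hy0, hy1, hy2]
  obtain ⟨ht0, ht1⟩ := ht
  clear hA0 e1 e2 e3 e4 e5 e6 e7 f0 f1 f2 f3 f4 f5 f6 f7 m0 m1 m2 p0 p1 p2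
  clear ha0 ha1 ha2 ha3 ha4 ha5 ha6 ha7 hb0 hb1 hb2 hb3 hb4 hb5 hb6 hb7 hx0 hx1 hx2 hy0 hy1 hy2
  clear hA hA4 hB hM hP ω
  ring_nf
  constructor
  · nlinarith [sq_nonneg t, ht0.le]
  · nlinarith [sq_nonneg t, sq_nonneg (1 - t), ht0.le, ht1.le]
end

section
/- Let ω ∈ L⊗ℝ and Ω ∈ L⊗ℂ be such that (ω·γ)² + |Ω·γ|² ≥ 1 for every nonzero γ ∈ L with γ·γ ≥ −2 and γ ∉ {α₀, −α₀}. Then for every integer k ≥ 1 and every family γ₁, …, γ_k of nonzero elements of L with γ_i·γ_i ≥ −2 for each i and γ₁ + ⋯ + γ_k = α₁ − α₂, one has ∑_{i=1}^{k} √((ω·γ_i)² + |Ω·γ_i|²) ≥ 2. -/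
open scoped BigOperators

/-!
Every class γᵢ that is not a multiple of α₀ has area at least 1, so it suffices to find two of
them. There is at least one, because α₁ − α₂ is not a multiple of α₀. If there were only one,
it would be α₁ − α₂ + mα₀ for some integer m, and since α₀ is orthogonal to α₁ − α₂ its square
would be −4 − 2m² < −2.
-/

open Finset

lemma exists_ne_notMem_of_sum_notMem {G ι : Type*} [AddCommGroup G] [Fintype ι]
    (H : AddSubgroup G) (γ : ι → G) (hsum : ∑ i, γ i ∉ H)
    (hγ : ∀ i, γ i - ∑ i, γ i ∉ H) : ∃ i j, i ≠ j ∧ γ i ∉ H ∧ γ j ∉ H := by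
  classical
  obtain ⟨j, hj⟩ : ∃ j, γ j ∉ H := by
    by_contra! hall
    exact hsum (H.sum_mem fun i _ => hall i)
  by_contra! hrest
  apply hγ j
  rw [← add_sum_erase _ _ (mem_univ j), sub_add_cancel_left]
  exact H.neg_mem (H.sum_mem fun i hi => hrest j i (mem_erase.mp hi).1.symm hj)

lemma bI_eq_toLinearMap₂' (x y : K3L) :
    bI x y = Matrix.toLinearMap₂' ℤ (Matrix.of K3Gram) x y := by
  simp only [bI, Matrix.toLinearMap₂'_apply', dotProduct, Matrix.mulVec, Matrix.of_apply, mul_sum,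
    mul_assoc]

lemma bI_alp_alp (a b : Fin 8) : bI (alp a) (alp b) = -CartanE8 a b := by
  simp [bI, alp, Pi.single_apply, K3Gram]

lemma bI_self_alp_one_sub_alp_two_add (m : ℤ) :
    bI (alp 1 - alp 2 + m • alp 0) (alp 1 - alp 2 + m • alp 0) = -4 - 2 * m ^ 2 := by
  simp only [bI_eq_toLinearMap₂', map_add, map_sub, map_zsmul, LinearMap.add_apply,
    LinearMap.sub_apply, LinearMap.smul_apply, smul_eq_mul]
  simp only [← bI_eq_toLinearMap₂', bI_alp_alp]
  simp only [CartanE8, Matrix.of_apply, Matrix.cons_val', Matrix.cons_val, Matrix.cons_val_zero,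
    Matrix.cons_val_one]
  ring

lemma alp_one_sub_alp_two_notMem_zmultiples :
    alp 1 - alp 2 ∉ AddSubgroup.zmultiples (alp 0) := by
  rintro ⟨m, hm⟩
  simpa [alp] using congrFun hm (.inl (.inl 1))

lemma bI_self_lt_neg_two_of_sub_mem_zmultiples (γ : K3L)
    (hγ : γ - (alp 1 - alp 2) ∈ AddSubgroup.zmultiples (alp 0)) : bI γ γ < -2 := by
  obtain ⟨m, hm⟩ := hγ
  rw [← sub_add_cancel γ (alp 1 - alp 2), ← hm, add_comm, bI_self_alp_one_sub_alp_two_add]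
  nlinarith [sq_nonneg m]

/-- The homological core of the main theorem: if `(ω·γ)² + |Ω·γ|² ≥ 1` for every
nonzero class `γ` of square `≥ −2` other than `±α₀`, then any decomposition
`γ₁ + ⋯ + γ_k = α₁ − α₂` into nonzero classes of square `≥ −2` satisfies
`∑ᵢ √((ω·γᵢ)² + |Ω·γᵢ|²) ≥ 2`. -/
theorem total_area_ge_two (ω : K3Idx → ℝ) (Ω : K3Idx → ℂ)
    (h : ∀ γ : K3L, γ ≠ 0 → -2 ≤ bI γ γ → γ ≠ alp 0 → γ ≠ -alp 0 →
      1 ≤ (bR ω (toR γ)) ^ 2 + (‖bC Ω (toC γ)‖) ^ 2) :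
    ∀ k : ℕ, 1 ≤ k → ∀ γ : Fin k → K3L,
      (∀ i, γ i ≠ 0) → (∀ i, -2 ≤ bI (γ i) (γ i)) →
      (∑ i, γ i) = alp 1 - alp 2 →
      2 ≤ ∑ i, Real.sqrt
        ((bR ω (toR (γ i))) ^ 2 + (‖bC Ω (toC (γ i))‖) ^ 2) := by
  intro k _ γ hne hsq hsum
  set H := AddSubgroup.zmultiples (alp 0)
  set area : Fin k → ℝ := fun i => √((bR ω (toR (γ i))) ^ 2 + (‖bC Ω (toC (γ i))‖) ^ 2)
  have one_le_area (i : Fin k) (hi : γ i ∉ H) : 1 ≤ area i :=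
    Real.one_le_sqrt.mpr <| h _ (hne i) (hsq i)
      (fun hα => hi (hα ▸ AddSubgroup.mem_zmultiples _))
      (fun hα => hi (hα ▸ H.neg_mem (AddSubgroup.mem_zmultiples _)))
  obtain ⟨i, j, hij, hi, hj⟩ := exists_ne_notMem_of_sum_notMem H γ
    (hsum ▸ alp_one_sub_alp_two_notMem_zmultiples)
    (fun i hi => (bI_self_lt_neg_two_of_sub_mem_zmultiples (γ i) (hsum ▸ hi)).not_ge (hsq i))
  calc 2 ≤ area i + area j := by linarith [one_le_area i hi, one_le_area j hj]
    _ = ∑ l ∈ {i, j}, area l := (sum_pair hij).symm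
    _ ≤ ∑ l, area l := sum_le_sum_of_subset_of_nonneg (subset_univ _)
          fun _ _ _ => Real.sqrt_nonneg _
end
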